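/- Let (Ω, ℱ, (ℱ_n)_{n∈ℕ}, P) be a filtered probability space, let γ > 0 and K ≥ 0, and let (V_n)_{n∈ℕ} be an adapted sequence of integrable random variables with V_n ≥ 1 almost surely, satisfying the drift condition E[V_{n+1} | ℱ_n] ≤ e^{−2γ} V_n + K almost surely for every n. Let r ≥ K e^{γ} / (1 − e^{−γ}) and define the hitting time τ := inf{ n ≥ 0 : V_n ≤ r }. Then for every n ∈ ℕ, P(τ > n) ≤ e^{−γ n} E[V_0]. -/

import Mathlib

open MeasureTheory

theorem stmt_3 {Ω : Type*} {m0 : MeasurableSpace Ω} (P : Measure Ω) [IsProbabilityMeasure P]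
    (ℱ : Filtration ℕ m0) (γ K : ℝ) (hγ : 0 < γ) (hK : 0 ≤ K)
    (V : ℕ → Ω → ℝ) (hadapt : Adapted ℱ V) (hint : ∀ n, Integrable (V n) P)
    (hone : ∀ n, ∀ᵐ ω ∂P, 1 ≤ V n ω)
    (hdrift : ∀ n, ∀ᵐ ω ∂P, (P[V (n + 1)|ℱ n]) ω ≤ Real.exp (-(2 * γ)) * V n ω + K)
    (r : ℝ) (hr : K * Real.exp γ / (1 - Real.exp (-γ)) ≤ r)
    (τ : Ω → ℕ∞)
    (hτ : ∀ ω, τ ω = sInf {m : ℕ∞ | ∃ n : ℕ, m = (n : ℕ∞) ∧ V n ω ≤ r}) :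
    ∀ n : ℕ, P {ω | (n : ℕ∞) < τ ω} ≤ ENNReal.ofReal (Real.exp (-(γ * n)) * ∫ ω, V 0 ω ∂P) := by
  -- the "not yet hit" events
  set A : ℕ → Set Ω := fun n => {ω | ∀ k ≤ n, r < V k ω} with hA
  have hexpγ : (0:ℝ) < 1 - Real.exp (-γ) := by
    have : Real.exp (-γ) < 1 := Real.exp_lt_one_iff.mpr (by linarith)
    linarith
  -- K ≤ r * (e^{-γ} - e^{-2γ})
  have hKr : K ≤ r * (Real.exp (-γ) - Real.exp (-(2*γ))) := by
    have h1 : K * Real.exp γ ≤ r * (1 - Real.exp (-γ)) := by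
      have := (div_le_iff₀ hexpγ).mp hr
      linarith
    have h2 : K * Real.exp γ * Real.exp (-γ) ≤ r * (1 - Real.exp (-γ)) * Real.exp (-γ) := by
      exact mul_le_mul_of_nonneg_right h1 (Real.exp_nonneg _)
    have he : Real.exp γ * Real.exp (-γ) = 1 := by
      rw [← Real.exp_add]; simp
    have he2 : Real.exp (-γ) * Real.exp (-γ) = Real.exp (-(2*γ)) := by
      rw [← Real.exp_add]; ring_nf
    calc K = K * (Real.exp γ * Real.exp (-γ)) := by rw [he]; ring
      _ = K * Real.exp γ * Real.exp (-γ) := by ring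
      _ ≤ r * (1 - Real.exp (-γ)) * Real.exp (-γ) := h2
      _ = r * (Real.exp (-γ) - Real.exp (-γ) * Real.exp (-γ)) := by ring
      _ = r * (Real.exp (-γ) - Real.exp (-(2*γ))) := by rw [he2]
  -- measurability of A n
  have hAmeas : ∀ n, MeasurableSet[ℱ n] (A n) := by
    intro n
    have : A n = ⋂ k ∈ Finset.Iic n, {ω | r < V k ω} := by
      ext ω; simp [hA, Set.mem_iInter]
    rw [this]
    refine MeasurableSet.biInter (Finset.Iic n).countable_toSet (fun k hk => ?_)
    have hk' : k ≤ n := Finset.mem_Iic.mp hk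
    have : StronglyMeasurable[ℱ n] (V k) := ((hadapt k).mono (ℱ.mono hk') le_rfl).stronglyMeasurable
    exact this.measurable measurableSet_Ioi
  have hAmeas0 : ∀ n, MeasurableSet (A n) := fun n => (ℱ.le n) _ (hAmeas n)
  have hAmono : ∀ n, A (n + 1) ⊆ A n := by
    intro n ω hω k hk; exact hω k (hk.trans (Nat.le_succ n))
  have hV0nonneg : (0:ℝ) ≤ ∫ ω, V 0 ω ∂P := by
    refine integral_nonneg_of_ae ?_
    filter_upwards [hone 0] with ω h
    simp only [Pi.zero_apply]; linarith
  -- the key induction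
  have key : ∀ n, ∫ ω in A n, V n ω ∂P ≤ Real.exp (-(γ * n)) * ∫ ω, V 0 ω ∂P := by
    intro n
    induction n with
    | zero =>
      simp only [Nat.cast_zero, mul_zero, neg_zero, Real.exp_zero, one_mul]
      refine setIntegral_le_integral (hint 0) ?_
      filter_upwards [hone 0] with ω h
      simp only [Pi.zero_apply]; linarith
    | succ n ih =>
      haveI : SigmaFinite (P.trim (ℱ.le n)) := by
        exact sigmaFiniteTrim_mono _ le_rfl
      have step1 : ∫ ω in A (n+1), V (n+1) ω ∂P ≤ ∫ ω in A n, V (n+1) ω ∂P := by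
        refine setIntegral_mono_set (hint (n+1)).integrableOn ?_
          (HasSubset.Subset.eventuallyLE (hAmono n))
        refine ae_restrict_of_ae ?_
        filter_upwards [hone (n+1)] with ω h
        simp only [Pi.zero_apply]; linarith
      have step2 : ∫ ω in A n, V (n+1) ω ∂P = ∫ ω in A n, (P[V (n+1)|ℱ n]) ω ∂P :=
        (setIntegral_condExp (ℱ.le n) (hint (n+1)) (hAmeas n)).symm
      have step3 : ∫ ω in A n, (P[V (n+1)|ℱ n]) ω ∂P
          ≤ ∫ ω in A n, (Real.exp (-(2*γ)) * V n ω + K) ∂P := by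
        refine setIntegral_mono_ae integrable_condExp.integrableOn
          (((hint n).const_mul _).add (integrable_const K)).integrableOn ?_
        exact hdrift n
      have step4 : ∫ ω in A n, (Real.exp (-(2*γ)) * V n ω + K) ∂P
          ≤ ∫ ω in A n, Real.exp (-γ) * V n ω ∂P := by
        refine setIntegral_mono_on (((hint n).const_mul _).add (integrable_const K)).integrableOn
          ((hint n).const_mul _).integrableOn (hAmeas0 n) ?_
        intro ω hω
        have hrV : r < V n ω := hω n le_rfl
        have hpos : (0:ℝ) < Real.exp (-γ) - Real.exp (-(2*γ)) := by
          have : Real.exp (-(2*γ)) < Real.exp (-γ) := Real.exp_lt_exp.mpr (by linarith)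
          linarith
        have : K ≤ (Real.exp (-γ) - Real.exp (-(2*γ))) * V n ω := by
          calc K ≤ r * (Real.exp (-γ) - Real.exp (-(2*γ))) := hKr
            _ ≤ V n ω * (Real.exp (-γ) - Real.exp (-(2*γ))) :=
              mul_le_mul_of_nonneg_right hrV.le hpos.le
            _ = (Real.exp (-γ) - Real.exp (-(2*γ))) * V n ω := by ring
        linarith
      have step5 : ∫ ω in A n, Real.exp (-γ) * V n ω ∂P
          = Real.exp (-γ) * ∫ ω in A n, V n ω ∂P := integral_const_mul _ _
      have hchain : ∫ ω in A (n+1), V (n+1) ω ∂P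
          ≤ Real.exp (-γ) * ∫ ω in A n, V n ω ∂P := by
        rw [← step5]; exact step1.trans (step2 ▸ (step3.trans step4))
      calc ∫ ω in A (n+1), V (n+1) ω ∂P
          ≤ Real.exp (-γ) * ∫ ω in A n, V n ω ∂P := hchain
        _ ≤ Real.exp (-γ) * (Real.exp (-(γ * n)) * ∫ ω, V 0 ω ∂P) :=
            mul_le_mul_of_nonneg_left ih (Real.exp_nonneg _)
        _ = Real.exp (-(γ * (n+1:ℕ))) * ∫ ω, V 0 ω ∂P := by
            rw [← mul_assoc, ← Real.exp_add]
            congr 2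
            push_cast; ring
  -- identify the event
  have hset : ∀ n : ℕ, {ω | (n : ℕ∞) < τ ω} = A n := by
    intro n
    ext ω
    simp only [Set.mem_setOf_eq, hτ ω, hA]
    constructor
    · intro h k hk
      by_contra hle
      push_neg at hle
      have hmem : (k : ℕ∞) ∈ {m : ℕ∞ | ∃ j : ℕ, m = (j : ℕ∞) ∧ V j ω ≤ r} := ⟨k, rfl, hle⟩
      have h1 := sInf_le hmem
      have hkn : (k : ℕ∞) ≤ (n : ℕ∞) := by exact_mod_cast hk
      exact absurd h (not_lt.mpr (h1.trans hkn))
    · intro h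
      have h1 : ((n:ℕ∞) + 1) ≤ sInf {m : ℕ∞ | ∃ j : ℕ, m = (j : ℕ∞) ∧ V j ω ≤ r} := by
        refine le_sInf ?_
        rintro m ⟨j, rfl, hj⟩
        have : n < j := by
          by_contra hjn
          push_neg at hjn
          exact absurd hj (not_le.mpr (h j hjn))
        exact_mod_cast this
      calc (n : ℕ∞) < (n : ℕ∞) + 1 := by
            exact_mod_cast Nat.lt_succ_self n
        _ ≤ _ := h1
  -- conclude
  intro n
  rw [hset n]
  have h1 : (P (A n)).toReal = ∫ _ in A n, (1:ℝ) ∂P := by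
    rw [setIntegral_const]; simp; rfl
  have h2 : ∫ _ in A n, (1:ℝ) ∂P ≤ ∫ ω in A n, V n ω ∂P := by
    refine setIntegral_mono_ae (integrable_const 1).integrableOn (hint n).integrableOn ?_
    exact hone n
  have h3 : (P (A n)).toReal ≤ Real.exp (-(γ * n)) * ∫ ω, V 0 ω ∂P :=
    (h1 ▸ h2).trans (key n)
  calc P (A n) = ENNReal.ofReal ((P (A n)).toReal) :=
        (ENNReal.ofReal_toReal (measure_ne_top P _)).symm
    _ ≤ ENNReal.ofReal (Real.exp (-(γ * n)) * ∫ ω, V 0 ω ∂P) := ENNReal.ofReal_le_ofReal h3
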